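/- If X ∼ BSN(λ, a, b), then −X ∼ BSN(−λ, b, a); equivalently, for all real x, all real λ and all a, b > 0, the densities satisfy g(−x; λ, a, b) = g(x; −λ, b, a). -/

import Mathlib

/-!
Reflection `t ↦ -t` exchanges the two tails of a distribution on `ℝ`. Since `φ` is even,
`Φ(-y) = 1 - Φ(y)`, and the skew-normal density `f_λ(t) = 2 φ(t) Φ(λt)` satisfies
`f_λ(-t) = f_{-λ}(t)`. Adding `f_λ + f_{-λ} = 2φ` shows that `f_{-λ}` has total mass `1`, so
`Φ(-x; λ) = 1 - Φ(x; -λ)`: reflecting `x` swaps the factors `Φ^{a-1}` and `(1 - Φ)^{b-1}`,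
and the remaining factors are invariant because `B` is symmetric.
-/

open MeasureTheory

/-- Standard normal density. -/
noncomputable def normPdf (x : ℝ) : ℝ := Real.exp (-x ^ 2 / 2) / Real.sqrt (2 * Real.pi)

/-- Standard normal cdf. -/
noncomputable def normCdf (x : ℝ) : ℝ := ∫ t in Set.Iic x, normPdf t

/-- Skew-normal cdf with parameter `l`. -/
noncomputable def snCdf (l z : ℝ) : ℝ := ∫ t in Set.Iic z, 2 * normPdf t * normCdf (l * t)

/-- The Beta function. -/
noncomputable def betaFn (a b : ℝ) : ℝ := Real.Gamma a * Real.Gamma b / Real.Gamma (a + b)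

/-- The Beta skew-normal density with parameters `l`, `a`, `b`. -/
noncomputable def bsnPdf (l a b x : ℝ) : ℝ :=
  (2 / betaFn a b) * snCdf l x ^ (a - 1) * (1 - snCdf l x) ^ (b - 1) * normPdf x *
    normCdf (l * x)

open Set ProbabilityTheory

lemma integral_Iic_neg_comp_neg {E : Type*} [NormedAddCommGroup E] [NormedSpace ℝ E]
    {f : ℝ → E} (hf : Integrable f) (x : ℝ) :
    ∫ t in Iic (-x), f (-t) = (∫ t, f t) - ∫ t in Iic x, f t := by
  rw [integral_comp_neg_Iic, neg_neg, eq_sub_iff_add_eq',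
    intervalIntegral.integral_Iic_add_Ioi hf.integrableOn hf.integrableOn]

lemma normPdf_eq_gaussianPDFReal : normPdf = gaussianPDFReal 0 1 := by
  ext x
  simp [normPdf, gaussianPDFReal, div_eq_inv_mul]

lemma normPdf_nonneg (x : ℝ) : 0 ≤ normPdf x := by
  unfold normPdf
  positivity

lemma normPdf_neg (x : ℝ) : normPdf (-x) = normPdf x := by
  simp [normPdf]

lemma integrable_normPdf : Integrable normPdf :=
  normPdf_eq_gaussianPDFReal ▸ integrable_gaussianPDFReal 0 1

lemma integral_normPdf : ∫ x, normPdf x = 1 :=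
  normPdf_eq_gaussianPDFReal ▸ integral_gaussianPDFReal_eq_one 0 one_ne_zero

lemma normCdf_nonneg (x : ℝ) : 0 ≤ normCdf x :=
  setIntegral_nonneg measurableSet_Iic fun t _ ↦ normPdf_nonneg t

lemma normCdf_le_one (x : ℝ) : normCdf x ≤ 1 :=
  integral_normPdf ▸ setIntegral_le_integral integrable_normPdf
    (Filter.Eventually.of_forall normPdf_nonneg)

lemma monotone_normCdf : Monotone normCdf := fun _ _ hxy ↦
  setIntegral_mono_set integrable_normPdf.integrableOn
    (Filter.Eventually.of_forall normPdf_nonneg)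
    (Filter.Eventually.of_forall (Iic_subset_Iic.2 hxy))

lemma normCdf_neg (x : ℝ) : normCdf (-x) = 1 - normCdf x := by
  rw [← integral_normPdf, normCdf, normCdf, ← integral_Iic_neg_comp_neg integrable_normPdf]
  simp only [normPdf_neg]

noncomputable def snPdf (l t : ℝ) : ℝ := 2 * normPdf t * normCdf (l * t)

lemma snCdf_eq_integral_snPdf (l z : ℝ) : snCdf l z = ∫ t in Iic z, snPdf l t := rfl

lemma snPdf_neg (l t : ℝ) : snPdf l (-t) = snPdf (-l) t := by
  rw [snPdf, snPdf, normPdf_neg, mul_neg, neg_mul]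

lemma snPdf_add_snPdf_neg (l t : ℝ) : snPdf l t + snPdf (-l) t = 2 * normPdf t := by
  rw [snPdf, snPdf, neg_mul, normCdf_neg]
  ring

lemma integrable_snPdf (l : ℝ) : Integrable (snPdf l) := by
  refine (integrable_normPdf.const_mul 2).mono' ?_ (Filter.Eventually.of_forall fun t ↦ ?_)
  · exact ((integrable_normPdf.aemeasurable.const_mul 2).mul
      (monotone_normCdf.measurable.comp (measurable_const_mul l)).aemeasurable).aestronglyMeasurable
  · have h0 := normCdf_nonneg (l * t)
    have h1 := normCdf_le_one (l * t)
    have hφ := normPdf_nonneg t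
    rw [Real.norm_eq_abs, abs_le, snPdf]
    constructor <;> nlinarith

lemma integral_snPdf (l : ℝ) : ∫ t, snPdf l t = 1 := by
  have h_refl : ∫ t, snPdf l t = ∫ t, snPdf (-l) t := by
    simp only [← snPdf_neg, integral_neg_eq_self (snPdf l)]
  have h_sum : (∫ t, snPdf l t) + ∫ t, snPdf (-l) t = 2 := by
    rw [← integral_add (integrable_snPdf l) (integrable_snPdf (-l))]
    simp only [snPdf_add_snPdf_neg, integral_const_mul, integral_normPdf, mul_one]
  linarith

lemma snCdf_neg (l x : ℝ) : snCdf l (-x) = 1 - snCdf (-l) x := by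
  rw [← integral_snPdf (-l), snCdf_eq_integral_snPdf, snCdf_eq_integral_snPdf,
    ← integral_Iic_neg_comp_neg (integrable_snPdf (-l))]
  simp only [snPdf_neg, neg_neg]

lemma betaFn_comm (a b : ℝ) : betaFn a b = betaFn b a := by
  rw [betaFn, betaFn, mul_comm, add_comm]

theorem bsn_neg_general (l a b : ℝ) (x : ℝ) :
    bsnPdf l a b (-x) = bsnPdf (-l) b a x := by
  rw [bsnPdf, bsnPdf, snCdf_neg, normPdf_neg, mul_neg, ← neg_mul, betaFn_comm, sub_sub_cancel]
  ring

/-- If `X ∼ BSN(l, a, b)` then `-X ∼ BSN(-l, b, a)`: the densities satisfy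
`g(-x; l, a, b) = g(x; -l, b, a)`. -/
theorem bsn_neg (l a b : ℝ) (ha : 0 < a) (hb : 0 < b) (x : ℝ) :
    bsnPdf l a b (-x) = bsnPdf (-l) b a x :=
  bsn_neg_general l a b x
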